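/- arXiv:0904.2944 — 2 statements merged into one kernel-verified Lean document; each statement's English description precedes it below -/
import Mathlib

section
/- Let (f, τ, c) be degree −2 branched covering data, and assume f is confluent and oriented. Let Y ⊆ ℂ be a continuum and let C be a connected component of f⁻¹(Y). Then T(C) is a connected component of f⁻¹(T(Y)) and f(T(C)) = T(Y). In particular, if Y is non-separating (ℂ \ Y is connected), then C is non-separating (ℂ \ C is connected). -/
/-!
Confluence and the fibre structure of `f` give `f⁻¹(Y) = C ∪ τ(C)`, and an open proper map sends
the components of `ℂ \ f⁻¹(Y)` onto components of `ℂ \ Y`, so `f⁻¹(T(Y)) = T(C ∪ τ(C))`.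
When `C` and `τ(C)` are disjoint, Janiszewski's theorem gives `T(C ∪ τ(C)) = T(C) ∪ T(τ(C))`.
It rests on the fact that `z ↦ z - p` has a continuous logarithm on a compact set `X` exactly
when `p` lies in the unbounded component of `ℂ \ X`: one way by lifting through `exp` the homotopy
along a path from far away to `p`, the other way because a logarithm on `X` would extend, through
the bounded component, to a logarithm of `w` on a large circle.
Either `τ(C) ⊆ T(C)`, or by the symmetry `τ` the hulls `T(C)` and `T(τ(C)) = τ(T(C))` are
disjoint; in both cases `T(C)` is a component, and since `f ∘ τ = f` it maps onto `T(Y)`.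
If `Y` is non-separating then `T(C) ⊆ C ∪ τ(C)`, so a bounded component of `ℂ \ C` would be an
open subset of `τ(C)` containing `τ(C)`, which would then be clopen.
-/

open Set Topology Bornology

/-- A continuum: a nonempty compact connected subset of ℂ. -/
def IsContinuum (K : Set ℂ) : Prop := IsCompact K ∧ IsConnected K

/-- The topological hull `T(Y)`: the complement of the unbounded connected
component of `ℂ \ Y`. -/
def hullC (Y : Set ℂ) : Set ℂ := {z | IsBounded (connectedComponentIn Yᶜ z)}

/-- `C` is a connected component of the set `S`. -/
def IsComponentOf (C S : Set ℂ) : Prop := ∃ x ∈ S, C = connectedComponentIn S x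

/-- A confluent map: each component of the preimage of a continuum maps onto it. -/
def Confluent (f : ℂ → ℂ) : Prop :=
  ∀ K C : Set ℂ, IsContinuum K → IsComponentOf C (f ⁻¹' K) → f '' C = K

open Metric

section ComplementComponents

variable {X : Type*} [TopologicalSpace X] [LocallyConnectedSpace X]

theorem frontier_connectedComponentIn_subset_compl {U : Set X} (hU : IsOpen U) (x : X) :
    frontier (connectedComponentIn U x) ⊆ Uᶜ := by
  intro y hy hyU
  have hyy : connectedComponentIn U y ∈ 𝓝 y :=
    hU.connectedComponentIn.mem_nhds (mem_connectedComponentIn hyU)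
  obtain ⟨w, hwy, hwx⟩ := mem_closure_iff_nhds.1 hy.1 _ hyy
  rw [connectedComponentIn_eq hwx, ← connectedComponentIn_eq hwy] at hy
  exact hy.2 (by rw [hU.connectedComponentIn.interior_eq]; exact mem_connectedComponentIn hyU)

theorem closure_connectedComponentIn_compl_subset {S : Set X} (hS : IsClosed S) (x : X) :
    closure (connectedComponentIn Sᶜ x) ⊆ connectedComponentIn Sᶜ x ∪ S := by
  rw [closure_eq_interior_union_frontier, hS.isOpen_compl.connectedComponentIn.interior_eq]
  exact union_subset_union_right _
    ((frontier_connectedComponentIn_subset_compl hS.isOpen_compl x).trans (compl_compl S).le)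

end ComplementComponents

section NormExterior

theorem isPreconnected_setOf_lt_norm {R : ℝ} (hR : 0 ≤ R) :
    IsPreconnected {z : ℂ | R < ‖z‖} := by
  have : {z : ℂ | R < ‖z‖} = (fun p : ℝ × ℂ => (p.1 : ℂ) * p.2) '' (Ioi R ×ˢ sphere 0 1) := by
    ext z
    refine ⟨fun hz => ?_, ?_⟩
    · have hz0 : z ≠ 0 := norm_pos_iff.1 (hR.trans_lt hz)
      exact ⟨(‖z‖, z / ‖z‖), ⟨hz, by simp [hz0]⟩, mul_div_cancel₀ z (by simpa using hz0)⟩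
    · rintro ⟨⟨r, u⟩, ⟨hr, hu⟩, rfl⟩
      simp only [mem_Ioi, mem_sphere_iff_norm, sub_zero] at hr hu
      simp [hu, abs_of_pos (hR.trans_lt hr), hr]
  rw [this]
  exact (isPreconnected_Ioi.prod (isPreconnected_sphere (by simp) 0 1)).image _
    (by fun_prop)

theorem not_isBounded_setOf_lt_norm (R : ℝ) : ¬ IsBounded {z : ℂ | R < ‖z‖} := by
  intro h
  exact NormedSpace.unbounded_univ ℝ ℂ ((h.union (isBounded_closedBall (x := 0) (r := R))).subset
    fun z _ => (lt_or_ge R ‖z‖).imp id mem_closedBall_zero_iff.2)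

variable {S : Set ℂ} {R : ℝ}

theorem setOf_lt_norm_subset_connectedComponentIn (hR : 0 ≤ R) (hS : S ⊆ closedBall 0 R)
    {z : ℂ} (hz : R < ‖z‖) : {w : ℂ | R < ‖w‖} ⊆ connectedComponentIn Sᶜ z :=
  (isPreconnected_setOf_lt_norm hR).subset_connectedComponentIn hz fun _ hw hwS =>
    (mem_closedBall_zero_iff.1 (hS hwS)).not_gt hw

theorem setOf_lt_norm_subset_connectedComponentIn_of_not_isBounded (hR : 0 ≤ R)
    (hS : S ⊆ closedBall 0 R) {z : ℂ} (hz : ¬ IsBounded (connectedComponentIn Sᶜ z)) :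
    {w : ℂ | R < ‖w‖} ⊆ connectedComponentIn Sᶜ z := by
  obtain ⟨w, hw, hwR⟩ : ∃ w ∈ connectedComponentIn Sᶜ z, R < ‖w‖ := by
    by_contra! h
    exact hz (isBounded_closedBall.subset fun w hw => mem_closedBall_zero_iff.2 (h w hw))
  rw [connectedComponentIn_eq hw]
  exact setOf_lt_norm_subset_connectedComponentIn hR hS hwR

end NormExterior

section Hull

variable {S T : Set ℂ}

theorem mem_hullC {z : ℂ} : z ∈ hullC S ↔ IsBounded (connectedComponentIn Sᶜ z) := Iff.rfl

theorem subset_hullC (S : Set ℂ) : S ⊆ hullC S := fun z hz => by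
  rw [mem_hullC, connectedComponentIn_eq_empty (not_not_intro hz : z ∉ Sᶜ)]
  exact isBounded_empty

theorem connectedComponentIn_subset_hullC {z : ℂ} (hb : IsBounded (connectedComponentIn Sᶜ z)) :
    connectedComponentIn Sᶜ z ⊆ hullC S := fun w hw => by
  rwa [mem_hullC, ← connectedComponentIn_eq hw]

theorem hullC_mono (h : S ⊆ T) : hullC S ⊆ hullC T := fun z hz => by
  by_cases hzT : z ∈ T
  · exact subset_hullC T hzT
  · exact (mem_hullC.1 hz).subset (connectedComponentIn_mono z (compl_subset_compl.2 h))

theorem connectedComponentIn_subset_compl_hullC {z : ℂ} (hz : z ∉ hullC S) :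
    connectedComponentIn Sᶜ z ⊆ (hullC S)ᶜ := fun w hw hwS => by
  rw [mem_hullC, ← connectedComponentIn_eq hw] at hwS
  exact hz hwS

theorem IsClosed.hullC (hS : IsClosed S) : IsClosed (hullC S) := by
  refine isOpen_compl_iff.1 (isOpen_iff_mem_nhds.2 fun z hz => ?_)
  have hzS : z ∈ Sᶜ := fun h => hz (subset_hullC S h)
  exact Filter.mem_of_superset (hS.isOpen_compl.connectedComponentIn.mem_nhds
    (mem_connectedComponentIn hzS)) (connectedComponentIn_subset_compl_hullC hz)

theorem hullC_hullC (S : Set ℂ) : hullC (hullC S) = hullC S := by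
  refine subset_antisymm (fun z hz => ?_) (subset_hullC _)
  by_contra hzS
  have hzS' : z ∈ Sᶜ := fun h => hzS (subset_hullC S h)
  exact hzS ((mem_hullC.1 hz).subset
    (isPreconnected_connectedComponentIn.subset_connectedComponentIn
      (mem_connectedComponentIn hzS') (connectedComponentIn_subset_compl_hullC hzS)))

theorem nonempty_frontier_of_isBounded {V : Set ℂ} (hV : V.Nonempty) (hb : IsBounded V) :
    (frontier V).Nonempty :=
  nonempty_frontier_iff.2 ⟨hV, fun h => NormedSpace.unbounded_univ ℝ ℂ (h ▸ hb)⟩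

theorem IsConnected.hullC (hS : IsConnected S) (hSc : IsClosed S) : IsConnected (hullC S) := by
  obtain ⟨s, hs⟩ := hS.nonempty
  refine ⟨⟨s, subset_hullC S hs⟩, isPreconnected_of_forall s fun z hz => ?_⟩
  by_cases hzS : z ∈ S
  · exact ⟨S, subset_hullC S, hs, hzS, hS.isPreconnected⟩
  set V := connectedComponentIn Sᶜ z
  have hV : IsPreconnected (closure V) := isPreconnected_connectedComponentIn.closure
  obtain ⟨y, hy⟩ := nonempty_frontier_of_isBounded ⟨z, mem_connectedComponentIn hzS⟩ hz
  have hyS : y ∈ S := by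
    simpa using frontier_connectedComponentIn_subset_compl hSc.isOpen_compl z hy
  refine ⟨S ∪ closure V, union_subset (subset_hullC S) ?_, Or.inl hs,
    Or.inr (subset_closure (mem_connectedComponentIn hzS)),
    hS.isPreconnected.union y hyS hy.1 hV⟩
  exact (closure_connectedComponentIn_compl_subset hSc z).trans
    (union_subset (connectedComponentIn_subset_hullC hz) (subset_hullC S))

theorem isConnected_compl_iff_hullC_eq_self (hS : IsBounded S) :
    IsConnected Sᶜ ↔ hullC S = S := by
  obtain ⟨R, hR0, hR⟩ := hS.subset_closedBall_lt 0 0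
  refine ⟨fun hSc => subset_antisymm (fun z hz => ?_) (subset_hullC S), fun hSS => ?_⟩
  · by_contra hzS
    refine not_isBounded_setOf_lt_norm R ((mem_hullC.1 hz).subset ?_)
    rw [hSc.isPreconnected.connectedComponentIn hzS]
    exact fun w hw hwS => (mem_closedBall_zero_iff.1 (hR hwS)).not_gt hw
  · set z₁ : ℂ := ((R + 1 : ℝ) : ℂ)
    have hz₁ : R < ‖z₁‖ := by
      rw [Complex.norm_real, Real.norm_of_nonneg (by linarith)]; linarith
    have hz₁S : z₁ ∈ Sᶜ := fun h => (mem_closedBall_zero_iff.1 (hR h)).not_gt hz₁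
    suffices Sᶜ ⊆ connectedComponentIn Sᶜ z₁ from
      (subset_antisymm this (connectedComponentIn_subset _ _)) ▸
        isConnected_connectedComponentIn_iff.2 hz₁S
    intro z hz
    have hzS : z ∉ hullC S := hSS.symm ▸ hz
    rw [← connectedComponentIn_eq
      (setOf_lt_norm_subset_connectedComponentIn_of_not_isBounded hR0.le hR hzS hz₁)]
    exact mem_connectedComponentIn hz

end Hull

section Logarithm

open Complex

theorem not_exists_continuous_log_on_sphere {R : ℝ} (hR : 0 < R) {L : ℂ → ℂ}
    (hL : Continuous L) (hexp : ∀ w : ℂ, ‖w‖ = R → exp (L w) = w) : False := by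
  set k : ℝ → ℂ := fun θ => L (R * exp (θ * I)) - θ * I
  have hkexp : ∀ θ : ℝ, exp (k θ) = R := fun θ => by
    rw [exp_sub, hexp _ (by simp [norm_exp_ofReal_mul_I, hR.le]),
      mul_div_cancel_right₀ _ (exp_ne_zero _)]
  -- `k` lifts a constant map through the covering `exp`, so it is constant
  have hconst : k = fun _ => k 0 := isCoveringMap_exp.eq_of_comp_eq (by fun_prop) continuous_const
    (funext fun θ => Subtype.ext (by simp only [Function.comp_apply, hkexp])) 0 rfl
  have h2π := congr_fun hconst (2 * Real.pi)
  have hturn : exp (((2 * Real.pi : ℝ) : ℂ) * I) = exp ((0 : ℝ) * I) := by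
    push_cast; rw [exp_two_pi_mul_I]; simp
  simp only [k, hturn, ofReal_zero, zero_mul, sub_zero, sub_eq_self] at h2π
  simp [Real.pi_ne_zero] at h2π

theorem exists_log_of_not_isBounded {X : Set ℂ} (hX : IsCompact X) {p : ℂ} (hp : p ∉ X)
    (hU : ¬ IsBounded (connectedComponentIn Xᶜ p)) :
    ∃ g : ℂ → ℂ, ContinuousOn g X ∧ ∀ x ∈ X, exp (g x) = x - p := by
  classical
  obtain ⟨R, hR, hXR⟩ := hX.isBounded.subset_closedBall_lt 0 0
  set q : ℂ := -((R + 1 : ℝ) : ℂ)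
  have hq : q ∈ connectedComponentIn Xᶜ p :=
    setOf_lt_norm_subset_connectedComponentIn_of_not_isBounded hR.le hXR hU
      (show R < ‖q‖ by rw [norm_neg, norm_real, Real.norm_of_nonneg (by linarith)]; linarith)
  have hpath : IsPathConnected (connectedComponentIn Xᶜ p) :=
    (hX.isClosed.isOpen_compl.connectedComponentIn.isConnected_iff_isPathConnected).1
      (isConnected_connectedComponentIn_iff.2 hp)
  set γ := (hpath.joinedIn q hq p (mem_connectedComponentIn hp)).somePath
  have hγ : ∀ t, ∀ x ∈ X, x - γ t ≠ 0 := fun t x hx h =>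
    connectedComponentIn_subset Xᶜ p (JoinedIn.somePath_mem _ t) (sub_eq_zero.1 h ▸ hx)
  have hslit : ∀ x ∈ X, x - q ∈ slitPlane := fun x hx => by
    refine mem_slitPlane_iff.2 (Or.inl ?_)
    have := (abs_le.1 ((abs_re_le_norm x).trans (mem_closedBall_zero_iff.1 (hXR hx)))).1
    simp [q]; linarith
  -- deform the explicit logarithm of `x - q` along `γ` by lifting the homotopy through `exp`
  let H : C(unitInterval × X, {z : ℂ // z ≠ 0}) :=
    ⟨fun tx => ⟨tx.2 - γ tx.1, hγ tx.1 tx.2 tx.2.2⟩, by fun_prop⟩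
  let g₀ : C(X, ℂ) := ⟨fun x => log (x - q),
    (continuous_subtype_val.sub continuous_const).clog fun x => hslit x x.2⟩
  have H₀ : ∀ x, H (0, x) = ⟨exp (g₀ x), exp_ne_zero _⟩ := fun x => Subtype.ext <| by
    simp [H, g₀, exp_log (slitPlane_ne_zero (hslit x x.2))]
  let G := isCoveringMap_exp.liftHomotopy H g₀ H₀
  refine ⟨fun z => if h : z ∈ X then G (1, ⟨z, h⟩) else 0, ?_, fun x hx => ?_⟩
  · rw [continuousOn_iff_continuous_domRestrict]
    convert G.continuous.comp ((continuous_const (y := (1 : unitInterval))).prodMk continuous_id)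
      using 1
    ext x
    simp
  · have := congr_fun (isCoveringMap_exp.liftHomotopy_lifts H g₀ H₀) (1, ⟨x, hx⟩)
    simpa [hx, H, G] using congr_arg Subtype.val this

theorem not_exists_log_of_isBounded {X : Set ℂ} (hX : IsClosed X) {p : ℂ} (hp : p ∉ X)
    (hb : IsBounded (connectedComponentIn Xᶜ p)) {g : ℂ → ℂ} (hg : ContinuousOn g X)
    (hexp : ∀ x ∈ X, exp (g x) = x - p) : False := by
  classical
  set V := connectedComponentIn Xᶜ p
  obtain ⟨G, hG⟩ := ContinuousMap.exists_restrict_eq hX ⟨X.domRestrict g, hg.domRestrict⟩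
  have hGX : ∀ x ∈ X, G x = g x := fun x hx => DFunLike.congr_fun hG ⟨x, hx⟩
  -- `φ : ℂ → ℂ \ {0}` equals `z - p` off the bounded set `V`, and it lifts through `exp`
  let φ : C(ℂ, ℂ) := ⟨V.piecewise (fun z => exp (G z)) (· - p), by
    refine Continuous.piecewise (fun z hz => ?_) (by fun_prop) (by fun_prop)
    have hzX : z ∈ X := by
      simpa using frontier_connectedComponentIn_subset_compl hX.isOpen_compl p hz
    simp only [hGX z hzX, hexp z hzX]⟩
  have hφ : ∀ z, φ z ∈ ({0}ᶜ : Set ℂ) := fun z => by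
    by_cases hz : z ∈ V
    · simp [φ, hz, exp_ne_zero]
    · simp only [φ, ContinuousMap.coe_mk, piecewise_eq_of_notMem _ _ _ hz, mem_compl_iff,
        mem_singleton_iff, sub_eq_zero]
      rintro rfl
      exact hz (mem_connectedComponentIn hp)
  obtain ⟨Λ, -, hΛ⟩ := (isCoveringMapOn_exp.existsUnique_continuousMap_lifts φ
    (exp_log (hφ 0)) hφ).exists
  obtain ⟨R, hR, hVR⟩ := hb.subset_closedBall_lt 0 p
  refine not_exists_continuous_log_on_sphere (by linarith : 0 < R + 1) (L := fun w => Λ (p + w))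
    (by fun_prop) fun w hw => ?_
  have hpw : p + w ∉ V := fun h => by
    have := mem_closedBall.1 (hVR h)
    rw [dist_eq_norm, add_sub_cancel_left, hw] at this
    linarith
  simpa [φ, hpw] using congr_fun hΛ (p + w)

theorem hullC_union_subset {A B : Set ℂ} (hA : IsCompact A) (hB : IsCompact B)
    (hAB : Disjoint A B) : hullC (A ∪ B) ⊆ hullC A ∪ hullC B := by
  intro z hz
  by_contra h
  rw [mem_union, not_or] at h
  have hzA : z ∉ A := fun h' => h.1 (subset_hullC A h')
  have hzB : z ∉ B := fun h' => h.2 (subset_hullC B h')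
  obtain ⟨gA, hgA, heA⟩ := exists_log_of_not_isBounded hA hzA h.1
  obtain ⟨gB, hgB, heB⟩ := exists_log_of_not_isBounded hB hzB h.2
  classical
  refine not_exists_log_of_isBounded (hA.union hB).isClosed (by simp [hzA, hzB]) hz
    (g := A.piecewise gA gB) ?_ ?_
  · exact ContinuousOn.union_of_isClosed
      (hgA.congr fun x hx => piecewise_eq_of_mem _ _ _ hx)
      (hgB.congr fun x hx => piecewise_eq_of_notMem _ _ _ (disjoint_right.1 hAB hx))
      hA.isClosed hB.isClosed
  · rintro x (hx | hx)
    · rw [piecewise_eq_of_mem _ _ _ hx, heA x hx]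
    · rw [piecewise_eq_of_notMem _ _ _ (disjoint_right.1 hAB hx), heB x hx]

end Logarithm

section Components

variable {K C D : Set ℂ}

theorem IsComponentOf.subset (hC : IsComponentOf C K) : C ⊆ K := by
  obtain ⟨x, -, rfl⟩ := hC
  exact connectedComponentIn_subset _ _

theorem IsComponentOf.isConnected (hC : IsComponentOf C K) : IsConnected C := by
  obtain ⟨x, hx, rfl⟩ := hC
  exact isConnected_connectedComponentIn_iff.2 hx

theorem IsComponentOf.isCompact (hK : IsCompact K) (hC : IsComponentOf C K) : IsCompact C := by
  obtain ⟨x, hx, rfl⟩ := hC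
  refine hK.of_isClosed_subset (isClosed_of_closure_subset ?_) (connectedComponentIn_subset _ _)
  exact isPreconnected_connectedComponentIn.closure.subset_connectedComponentIn
    (subset_closure (mem_connectedComponentIn hx))
    (closure_minimal (connectedComponentIn_subset _ _) hK.isClosed)

theorem IsComponentOf.eq_or_disjoint (hC : IsComponentOf C K) (hD : IsComponentOf D K) :
    C = D ∨ Disjoint C D := by
  obtain ⟨x, -, rfl⟩ := hC
  obtain ⟨y, -, rfl⟩ := hD
  refine or_iff_not_imp_right.2 fun h => ?_
  obtain ⟨z, hzx, hzy⟩ := not_disjoint_iff.1 h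
  rw [connectedComponentIn_eq hzx, connectedComponentIn_eq hzy]

theorem IsConnected.isComponentOf_self (hC : IsConnected C) : IsComponentOf C C := by
  obtain ⟨x, hx⟩ := hC.nonempty
  exact ⟨x, hx, (hC.isPreconnected.connectedComponentIn hx).symm⟩

theorem IsConnected.isComponentOf_union (hC : IsConnected C) (hCc : IsClosed C)
    (hDc : IsClosed D) (hCD : Disjoint C D) : IsComponentOf C (C ∪ D) := by
  obtain ⟨x, hx⟩ := hC.nonempty
  refine ⟨x, Or.inl hx, subset_antisymm
    (hC.isPreconnected.subset_connectedComponentIn hx subset_union_left) ?_⟩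
  refine ((isPreconnected_iff_subset_of_disjoint_closed.1 isPreconnected_connectedComponentIn)
    C D hCc hDc (connectedComponentIn_subset _ _) ?_).resolve_right fun h => ?_
  · rw [hCD.inter_eq, inter_empty]
  · exact disjoint_left.1 hCD hx (h (mem_connectedComponentIn (Or.inl hx)))

theorem IsComponentOf.image_homeomorph (h : ℂ ≃ₜ ℂ) (hK : h '' K = K) (hC : IsComponentOf C K) :
    IsComponentOf (h '' C) K := by
  obtain ⟨x, hx, rfl⟩ := hC
  refine ⟨h x, hK ▸ mem_image_of_mem h hx, ?_⟩
  rw [h.image_connectedComponentIn hx, hK]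

end Components

section HullsOfComponents

theorem disjoint_hullC {A B : Set ℂ} (hA : IsClosed A) (hB : IsClosed B)
    (hAB : Disjoint A (hullC B)) (hBA : Disjoint B (hullC A)) :
    Disjoint (hullC A) (hullC B) := by
  refine disjoint_left.2 fun z hzA hzB => ?_
  have hzA' : z ∈ Aᶜ := fun h => disjoint_left.1 hAB h hzB
  have hzB' : z ∈ Bᶜ := fun h => disjoint_left.1 hBA h hzA
  have hVA : connectedComponentIn Aᶜ z ⊆ Bᶜ := fun w hw hwB =>
    disjoint_left.1 hBA hwB (connectedComponentIn_subset_hullC hzA hw)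
  have hVB : connectedComponentIn Bᶜ z ⊆ Aᶜ := fun w hw hwA =>
    disjoint_left.1 hAB hwA (connectedComponentIn_subset_hullC hzB hw)
  -- the bounded components of `Aᶜ` and `Bᶜ` at `z` coincide, so their frontier lies in `A ∩ B`
  have heq : connectedComponentIn Aᶜ z = connectedComponentIn Bᶜ z := subset_antisymm
    (isPreconnected_connectedComponentIn.subset_connectedComponentIn
      (mem_connectedComponentIn hzA') hVA)
    (isPreconnected_connectedComponentIn.subset_connectedComponentIn
      (mem_connectedComponentIn hzB') hVB)
  obtain ⟨y, hy⟩ := nonempty_frontier_of_isBounded ⟨z, mem_connectedComponentIn hzA'⟩ hzA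
  have hyA : y ∈ A := by simpa using frontier_connectedComponentIn_subset_compl hA.isOpen_compl z hy
  have hyB : y ∈ B := by
    rw [heq] at hy
    simpa using frontier_connectedComponentIn_subset_compl hB.isOpen_compl z hy
  exact disjoint_left.1 hAB hyA (subset_hullC B hyB)

variable {K C D : Set ℂ} (hK : IsCompact K) (hC : IsComponentOf C K) (hD : IsComponentOf D K)
include hK hC hD

theorem hullC_union_of_isComponentOf : hullC (C ∪ D) = hullC C ∪ hullC D := by
  rcases hC.eq_or_disjoint hD with rfl | hCD
  · rw [union_self, union_self]
  exact subset_antisymm (hullC_union_subset (hC.isCompact hK) (hD.isCompact hK) hCD)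
    (union_subset (hullC_mono subset_union_left) (hullC_mono subset_union_right))

theorem isComponentOf_hullC_union (hsymm : Disjoint D (hullC C) → Disjoint C (hullC D)) :
    IsComponentOf (hullC C) (hullC C ∪ hullC D) := by
  have hCc := (hC.isCompact hK).isClosed
  have hDc := (hD.isCompact hK).isClosed
  have hTC := hC.isConnected.hullC hCc
  rcases hC.eq_or_disjoint hD with rfl | hCD
  · rw [union_self]
    exact hTC.isComponentOf_self
  by_cases hDC : Disjoint D (hullC C)
  · exact hTC.isComponentOf_union hCc.hullC hDc.hullC (disjoint_hullC hCc hDc (hsymm hDC) hDC)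
  -- otherwise `D` lies in a bounded component of `Cᶜ`
  obtain ⟨d, hdD, hdC⟩ := not_disjoint_iff.1 hDC
  have hDC' : D ⊆ hullC C :=
    (hD.isConnected.isPreconnected.subset_connectedComponentIn hdD
      fun x hx hxC => disjoint_left.1 hCD hxC hx).trans (connectedComponentIn_subset_hullC hdC)
  rw [union_eq_left.2 ((hullC_mono hDC').trans (hullC_hullC C).le)]
  exact hTC.isComponentOf_self

theorem hullC_eq_self_of_hullC_subset_union (h : hullC C ⊆ C ∪ D) : hullC C = C := by
  rcases hC.eq_or_disjoint hD with rfl | hCD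
  · exact subset_antisymm (h.trans (union_self C).le) (subset_hullC C)
  refine subset_antisymm (fun z hz => ?_) (subset_hullC C)
  by_contra hzC
  -- the bounded component `V` of `Cᶜ` at `z` lies in `D`, hence equals it, and is clopen
  set V := connectedComponentIn Cᶜ z
  have hVD : V ⊆ D := fun w hw =>
    (h (connectedComponentIn_subset_hullC hz hw)).resolve_left (connectedComponentIn_subset _ _ hw)
  have hDV : D ⊆ V := hD.isConnected.isPreconnected.subset_connectedComponentIn
    (hVD (mem_connectedComponentIn hzC)) fun x hx hxC => disjoint_left.1 hCD hxC hx
  have hclopen : IsClopen D := ⟨(hD.isCompact hK).isClosed,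
    subset_antisymm hVD hDV ▸ (hC.isCompact hK).isClosed.isOpen_compl.connectedComponentIn⟩
  exact NormedSpace.unbounded_univ ℝ ℂ
    (hclopen.eq_univ hD.isConnected.nonempty ▸ (hD.isCompact hK).isBounded)

end HullsOfComponents

section Maps

theorem IsOpenMap.image_connectedComponentIn_preimage {X Y : Type*} [TopologicalSpace X]
    [TopologicalSpace Y] [LocallyConnectedSpace X] {f : X → Y} (hf : Continuous f)
    (hfo : IsOpenMap f) (hfc : IsClosedMap f) {U : Set Y} (hU : IsOpen U) {z : X}
    (hz : f z ∈ U) : f '' connectedComponentIn (f ⁻¹' U) z = connectedComponentIn U (f z) := by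
  set W := connectedComponentIn (f ⁻¹' U) z
  have hzW : z ∈ W := mem_connectedComponentIn hz
  have hWo : IsOpen W := (hU.preimage hf).connectedComponentIn
  refine subset_antisymm ((isPreconnected_connectedComponentIn.image f hf.continuousOn)
    |>.subset_connectedComponentIn (mem_image_of_mem f hzW)
    (image_subset_iff.2 (connectedComponentIn_subset _ _))) ?_
  -- `f '' W` is open, and closed in `U` because `f` is closed and `frontier W` misses `f ⁻¹' U`
  have hclosed : closure (f '' W) ∩ U ⊆ f '' W := by
    rintro y ⟨hy, hyU⟩
    obtain ⟨x, hx, rfl⟩ := closure_minimal (image_mono subset_closure) (hfc _ isClosed_closure) hy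
    rw [closure_eq_interior_union_frontier, hWo.interior_eq] at hx
    exact hx.elim (mem_image_of_mem f) fun h =>
      absurd hyU (frontier_connectedComponentIn_subset_compl (hU.preimage hf) z h)
  refine isPreconnected_connectedComponentIn.subset_left_of_subset_union (hfo W hWo)
    isClosed_closure.isOpen_compl (disjoint_compl_right.mono_left subset_closure)
    (fun y hy => ?_) ⟨f z, mem_connectedComponentIn hz, mem_image_of_mem f hzW⟩
  by_cases hyW : y ∈ closure (f '' W)
  · exact Or.inl (hclosed ⟨hyW, connectedComponentIn_subset _ _ hy⟩)
  · exact Or.inr hyW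

variable {f : ℂ → ℂ}

theorem IsProperMap.isBounded_image_iff (hf : IsProperMap f) {V : Set ℂ} :
    IsBounded (f '' V) ↔ IsBounded V := by
  refine ⟨fun h => ?_, fun h => ?_⟩
  · exact (hf.isCompact_preimage h.isCompact_closure).isBounded.subset
      fun x hx => subset_closure (mem_image_of_mem f hx)
  · exact (h.isCompact_closure.image hf.continuous).isBounded.subset
      (image_mono subset_closure)

theorem IsProperMap.surjective_of_isOpenMap (hf : IsProperMap f) (hfo : IsOpenMap f) :
    Function.Surjective f :=
  range_eq_univ.1 (IsClopen.eq_univ ⟨hf.isClosedMap.isClosed_range, hfo.isOpen_range⟩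
    (range_nonempty f))

theorem IsProperMap.preimage_hullC (hf : IsProperMap f) (hfo : IsOpenMap f) {S : Set ℂ}
    (hS : IsClosed S) : f ⁻¹' hullC S = hullC (f ⁻¹' S) := by
  ext z
  by_cases hz : f z ∈ S
  · exact iff_of_true (subset_hullC S hz) (subset_hullC _ hz)
  rw [mem_preimage, mem_hullC, mem_hullC, ← preimage_compl,
    ← hf.isBounded_image_iff (V := connectedComponentIn (f ⁻¹' Sᶜ) z),
    hfo.image_connectedComponentIn_preimage hf.continuous hf.isClosedMap hS.isOpen_compl hz]

end Maps

theorem Homeomorph.image_hullC (h : ℂ ≃ₜ ℂ) (S : Set ℂ) : h '' hullC S = hullC (h '' S) := by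
  ext z
  obtain ⟨x, rfl⟩ := h.surjective z
  by_cases hx : x ∈ S
  · exact iff_of_true (mem_image_of_mem h (subset_hullC S hx))
      (subset_hullC _ (mem_image_of_mem h hx))
  rw [h.injective.mem_set_image, mem_hullC, mem_hullC, ← h.image_compl,
    ← h.image_connectedComponentIn hx, h.isProperMap.isBounded_image_iff]

theorem preimage_eq_union_image_of_fibers {α β : Type*} {f : α → β} {τ : α → α}
    (hfτ : ∀ x, f (τ x) = f x) (hfib : ∀ x y, f x = f y → y = x ∨ y = τ x) {C : Set α}
    {Y : Set β} (hCY : C ⊆ f ⁻¹' Y) (hfC : f '' C = Y) : f ⁻¹' Y = C ∪ τ '' C := by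
  refine subset_antisymm (fun x hx => ?_) (union_subset hCY ?_)
  · obtain ⟨y, hy, hyx⟩ := hfC.symm ▸ hx
    rcases hfib y x hyx with rfl | rfl
    exacts [Or.inl hy, Or.inr (mem_image_of_mem τ hy)]
  · rintro - ⟨y, hy, rfl⟩
    simpa [mem_preimage, hfτ] using hCY hy

theorem hull_of_pullback_is_pullback_of_hull_general
    (f τ : ℂ → ℂ)
    (hf : Continuous f) (hopen : IsOpenMap f)
    (hperfect : ∀ K : Set ℂ, IsCompact K → IsCompact (f ⁻¹' K))
    (hτ : Continuous τ) (hττ : ∀ x, τ (τ x) = x) (hfτ : ∀ x, f (τ x) = f x)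
    (hfib : ∀ x y, f x = f y → y = x ∨ y = τ x)
    (hconf : Confluent f)
    (Y C : Set ℂ) (hY : IsContinuum Y) (hC : IsComponentOf C (f ⁻¹' Y)) :
    IsComponentOf (hullC C) (f ⁻¹' hullC Y) ∧
    f '' hullC C = hullC Y ∧
    (IsConnected Yᶜ → IsConnected Cᶜ) := by
  have hproper : IsProperMap f := isProperMap_iff_isCompact_preimage.2 ⟨hf, hperfect⟩
  let σ : ℂ ≃ₜ ℂ := ⟨Function.Involutive.toPerm τ hττ, hτ, hτ⟩
  have hσσ : ∀ S, τ '' (τ '' S) = S := fun S => by simp [image_image, hττ]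
  have hfτ' : f ∘ τ = f := funext hfτ
  have hK : IsCompact (f ⁻¹' Y) := hperfect Y hY.1
  have hD : IsComponentOf (τ '' C) (f ⁻¹' Y) :=
    hC.image_homeomorph σ (by
      rw [show ⇑σ = τ from rfl, Function.Involutive.image_eq_preimage_symm hττ, ← preimage_comp,
        hfτ'])
  have hpre : f ⁻¹' Y = C ∪ τ '' C :=
    preimage_eq_union_image_of_fibers hfτ hfib hC.subset (hconf Y C hY hC)
  have hσT : τ '' hullC C = hullC (τ '' C) := σ.image_hullC C
  have hH : f ⁻¹' hullC Y = hullC C ∪ τ '' hullC C := by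
    rw [hproper.preimage_hullC hopen hY.1.isClosed, hpre, hullC_union_of_isComponentOf hK hC hD,
      hσT]
  refine ⟨?_, ?_, fun hYc => ?_⟩
  · rw [hH, hσT]
    refine isComponentOf_hullC_union hK hC hD fun h => ?_
    rw [← hσT]
    simpa only [hσσ] using (disjoint_image_iff (f := τ) σ.injective).2 h
  · rw [← image_preimage_eq (hullC Y) (hproper.surjective_of_isOpenMap hopen), hH, image_union,
      ← image_comp, hfτ', union_self]
  · rw [isConnected_compl_iff_hullC_eq_self hY.1.isBounded] at hYc
    rw [isConnected_compl_iff_hullC_eq_self (hC.isCompact hK).isBounded]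
    refine hullC_eq_self_of_hullC_subset_union hK hC hD ?_
    rw [← hpre, ← hYc, hH]
    exact subset_union_left

theorem hull_of_pullback_is_pullback_of_hull
    (f τ : ℂ → ℂ) (c : ℂ)
    (hf : Continuous f) (hopen : IsOpenMap f)
    (hperfect : ∀ K : Set ℂ, IsCompact K → IsCompact (f ⁻¹' K))
    (hτ : Continuous τ) (hττ : ∀ x, τ (τ x) = x) (hfτ : ∀ x, f (τ x) = f x)
    (hfib : ∀ x y, f x = f y → y = x ∨ y = τ x)
    (hc : τ c = c) (hcuniq : ∀ x, τ x = x → x = c)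
    (hconf : Confluent f)
    (horiented : ∀ Z : Set ℂ, IsContinuum Z → f '' hullC Z ⊆ hullC (f '' Z))
    (Y C : Set ℂ) (hY : IsContinuum Y) (hC : IsComponentOf C (f ⁻¹' Y)) :
    IsComponentOf (hullC C) (f ⁻¹' hullC Y) ∧
    f '' hullC C = hullC Y ∧
    (IsConnected Yᶜ → IsConnected Cᶜ) :=
  hull_of_pullback_is_pullback_of_hull_general f τ hf hopen hperfect hτ hττ hfτ hfib hconf Y C hY hC
end

section
/- For the map f : ℂ → ℂ defined by f(z) = φ(z) + T(Im φ(z)), where φ(0) = 0, φ(z) = z²/|z| for z ≠ 0, and T(s) = 2|s|/√3 + 2, and for the open sector B = {z ∈ ℂ : Re z > 0 and |Im z| < √3·Re z}, every orbit eventually enters and remains in B: for every z ∈ ℂ there exists N ∈ ℕ such that fⁿ(z) ∈ B for all n ≥ N. -/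
/-!
Write `f = h ∘ φ` with `h w = w + T(Im w)`. Since `|φ z| = |z|`, the whole argument is about `h`:
with `s = √3`, `h w ∈ B` exactly when `s Re w + |Im w| + 2s > 0`, and otherwise
`|h w|² = |w|² + T (2 Re w + T) ≤ |w|² - 4` because `T ≥ 2` and `2 Re w + T ≤ -2`.
So `|fⁿ z|²` drops by 4 at each step until the orbit lands in `B`. Finally `B` is invariant:
`φ` maps `B` into the sector of arguments in `(-2π/3, 2π/3)`, where `s Re w + |Im w| > 0`.
-/

open Complex

/-- The degree-two angle-doubling map `φ(r e^{iθ}) = r e^{2iθ}`. -/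
noncomputable def phiMap (z : ℂ) : ℂ :=
  if z = 0 then 0 else z ^ 2 / (‖z‖ : ℂ)

/-- The translation amount `T(s) = 2|s|/√3 + 2`. -/
noncomputable def Tshift (s : ℝ) : ℝ := 2 * |s| / Real.sqrt 3 + 2

/-- The map `f(z) = φ(z) + T(Im φ(z))`. -/
noncomputable def fMap (z : ℂ) : ℂ := phiMap z + (Tshift ((phiMap z).im) : ℂ)

/-- The open sector of points with argument in `(-π/3, π/3)`. -/
def openSector : Set ℂ := {z : ℂ | 0 < z.re ∧ |z.im| < Real.sqrt 3 * z.re}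

open Filter Function Set

theorem Function.exists_iterate_mem_of_descent {α : Type*} {f : α → α} {S : Set α} {V : α → ℝ}
    {c : ℝ} (hc : 0 < c) (hV : ∀ x, 0 ≤ V x) (hstep : ∀ x, f x ∈ S ∨ V (f x) ≤ V x - c)
    (x : α) : ∃ n, f^[n] x ∈ S := by
  obtain ⟨k, hk⟩ := exists_nat_ge (V x / c)
  rw [div_le_iff₀ hc] at hk
  induction k generalizing x with
  | zero =>
    refine ⟨1, (hstep x).resolve_right fun h => ?_⟩
    push_cast at hk
    linarith [hV (f x)]
  | succ k ih =>
    rcases hstep x with h | h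
    · exact ⟨1, h⟩
    · obtain ⟨n, hn⟩ := ih (f x) (by push_cast at hk; linarith)
      exact ⟨n + 1, hn⟩

theorem Function.eventually_iterate_mem_of_descent {α : Type*} {f : α → α} {S : Set α}
    {V : α → ℝ} {c : ℝ} (hc : 0 < c) (hV : ∀ x, 0 ≤ V x) (hS : MapsTo f S S)
    (hstep : ∀ x, f x ∈ S ∨ V (f x) ≤ V x - c) (x : α) : ∀ᶠ n in atTop, f^[n] x ∈ S := by
  obtain ⟨N, hN⟩ := exists_iterate_mem_of_descent hc hV hstep x
  refine eventually_atTop.2 ⟨N, fun n hn => ?_⟩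
  rw [← Nat.sub_add_cancel hn, iterate_add_apply]
  exact hS.iterate (n - N) hN

theorem phiMap_mul_norm (z : ℂ) : phiMap z * ‖z‖ = z ^ 2 := by
  by_cases hz : z = 0 <;> simp [phiMap, hz]

theorem norm_phiMap (z : ℂ) : ‖phiMap z‖ = ‖z‖ := by
  by_cases hz : z = 0 <;> simp [phiMap, hz, sq]

theorem re_phiMap_mul_norm (z : ℂ) : (phiMap z).re * ‖z‖ = z.re ^ 2 - z.im ^ 2 := by
  simpa [sq] using congrArg re (phiMap_mul_norm z)

theorem im_phiMap_mul_norm (z : ℂ) : (phiMap z).im * ‖z‖ = 2 * z.re * z.im := by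
  have h := congrArg im (phiMap_mul_norm z)
  simp only [sq, mul_im, ofReal_re, ofReal_im, mul_zero, zero_add] at h
  linarith

noncomputable def shiftMap (w : ℂ) : ℂ := w + (Tshift w.im : ℂ)

theorem fMap_eq_shiftMap_phiMap (z : ℂ) : fMap z = shiftMap (phiMap z) := rfl

theorem sqrt_three_mul_re_shiftMap (w : ℂ) :
    √3 * (shiftMap w).re = √3 * w.re + 2 * |w.im| + 2 * √3 := by
  simp only [shiftMap, Tshift, add_re, ofReal_re]
  field_simp
  ring

theorem shiftMap_mem_openSector (w : ℂ) (hw : 0 < √3 * w.re + |w.im| + 2 * √3) :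
    shiftMap w ∈ openSector := by
  have him : (shiftMap w).im = w.im := by simp [shiftMap]
  have hlt : |(shiftMap w).im| < √3 * (shiftMap w).re := by
    rw [him, sqrt_three_mul_re_shiftMap]; linarith
  refine ⟨?_, hlt⟩
  have := (abs_nonneg _).trans_lt hlt
  exact pos_of_mul_pos_right this (by positivity)

theorem normSq_shiftMap_le (w : ℂ) (hw : √3 * w.re + |w.im| + 2 * √3 ≤ 0) :
    normSq (shiftMap w) ≤ normSq w - 4 := by
  set T := Tshift w.im
  have hT : 2 ≤ T := by simp only [T, Tshift]; linarith [show 0 ≤ 2 * |w.im| / √3 by positivity]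
  have hsT : √3 * T = 2 * |w.im| + 2 * √3 := by simp only [T, Tshift]; field_simp
  have hre : 2 * w.re + T ≤ -2 := by
    have : √3 * (2 * w.re + T) ≤ √3 * (-2) := by linarith
    exact le_of_mul_le_mul_left this (by positivity)
  have : normSq (shiftMap w) = normSq w + T * (2 * w.re + T) := by
    simp only [shiftMap, normSq_apply, add_re, add_im, ofReal_re, ofReal_im, T]; ring
  rw [this]
  nlinarith

theorem shiftMap_mem_openSector_or_normSq_le (w : ℂ) :
    shiftMap w ∈ openSector ∨ normSq (shiftMap w) ≤ normSq w - 4 := by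
  rcases lt_or_ge 0 (√3 * w.re + |w.im| + 2 * √3) with hw | hw
  exacts [Or.inl (shiftMap_mem_openSector w hw), Or.inr (normSq_shiftMap_le w hw)]

theorem sqrt_three_mul_re_phiMap_add_abs_im_pos {z : ℂ} (hz : z ∈ openSector) :
    0 < √3 * (phiMap z).re + |(phiMap z).im| := by
  obtain ⟨hx, hy⟩ := hz
  have hr : 0 < ‖z‖ := norm_pos_iff.2 fun h => by simp [h] at hx
  refine pos_of_mul_pos_left ?_ hr.le
  have hfactor : (√3 * (phiMap z).re + |(phiMap z).im|) * ‖z‖ =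
      (√3 * z.re - |z.im|) * (√3 * |z.im| + z.re) := by
    rw [add_mul, mul_assoc, re_phiMap_mul_norm, ← abs_of_pos hr, ← abs_mul,
      im_phiMap_mul_norm, abs_mul, abs_mul, abs_two, abs_of_pos hx]
    linear_combination -(z.re * |z.im|) * Real.sq_sqrt (show (0 : ℝ) ≤ 3 by norm_num) +
      √3 * sq_abs z.im
  rw [hfactor]
  exact mul_pos (by linarith) (by positivity)

theorem mapsTo_fMap_openSector : MapsTo fMap openSector openSector := fun z hz => by
  rw [fMap_eq_shiftMap_phiMap]
  apply shiftMap_mem_openSector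
  linarith [sqrt_three_mul_re_phiMap_add_abs_im_pos hz, show 0 < √3 by positivity]

theorem fMap_mem_openSector_or_normSq_le (z : ℂ) :
    fMap z ∈ openSector ∨ normSq (fMap z) ≤ normSq z - 4 := by
  rw [fMap_eq_shiftMap_phiMap, normSq_eq_norm_sq z, ← norm_phiMap, ← normSq_eq_norm_sq]
  exact shiftMap_mem_openSector_or_normSq_le (phiMap z)

theorem fMap_orbits_eventually_in_open_sector :
    ∀ z : ℂ, ∃ N : ℕ, ∀ n ≥ N, fMap^[n] z ∈ openSector := fun z =>
  eventually_atTop.1 <| eventually_iterate_mem_of_descent four_pos normSq_nonneg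
    mapsTo_fMap_openSector fMap_mem_openSector_or_normSq_le z
end
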